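/- If a probability density on ℝ has the form f(x) = e^{−x²/2 − V(x)} with V convex, then a random variable X with density f satisfies Var[X] ≤ 1. -/

import Mathlib

open MeasureTheory Real

/-- `f` has the form `f x = e^{-x²/2 - V x}` with `V : ℝ → ℝ ∪ {∞}` convex; equivalently,
`x ↦ f x · e^{x²/2}` is log-concave (the density is more log-concave than the Gaussian). -/
def RelLogConcave (f : ℝ → ℝ) : Prop :=
  ∀ x y a b : ℝ, 0 ≤ a → 0 ≤ b → a + b = 1 →
    (f x * Real.exp (x ^ 2 / 2)) ^ a * (f y * Real.exp (y ^ 2 / 2)) ^ b ≤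
      f (a * x + b * y) * Real.exp ((a * x + b * y) ^ 2 / 2)

/-!
Fix `l : ℝ`. Relative log-concavity of `f` at midpoints gives
`e^{lx} f(x) · e^{-ly} f(y) ≤ (e^{l²/2} f((x+y)/2))²`, so the midpoint form of the
Prékopa–Leindler inequality bounds `M(l) M(-l) ≤ e^{l²}`, where `M(l) = ∫ e^{lx} f(x) dx`.
After centring at the mean, both factors are at least `1` (from `e^u ≥ 1 + u`) and their sum is at
least `2 + l² Var` (from `e^u + e^{-u} ≥ 2 + u²`), hence `1 + l² Var ≤ e^{l²}` for every `l`, and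
`Var ≤ 1` follows by comparing derivatives at `l = 0`.

On the line, Prékopa–Leindler reduces, through the layer-cake formula, to the Brunn–Minkowski
inequality `|A| + |B| ≤ 2 |(A + B) / 2|` for intervals, once the two log-concave functions are
truncated to be bounded and rescaled to have the same supremum.
-/

open Set

lemma Icc_add_div_two_subset {A B C : Set ℝ} (hC : ∀ a ∈ A, ∀ b ∈ B, (a + b) / 2 ∈ C)
    {a a' b b' : ℝ} (hA : Icc a a' ⊆ A) (hB : Icc b b' ⊆ B) (ha : a ≤ a') (hb : b ≤ b') :
    Icc ((a + b) / 2) ((a' + b') / 2) ⊆ C := by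
  rintro z ⟨hz₁, hz₂⟩
  rcases le_total z ((a' + b) / 2) with h | h
  · simpa using hC (2 * z - b) (hA ⟨by linarith, by linarith⟩) b (hB ⟨le_rfl, hb⟩)
  · simpa using hC a' (hA ⟨ha, le_rfl⟩) (2 * z - a') (hB ⟨by linarith, by linarith⟩)

theorem volume_add_volume_le_two_mul_of_add_div_two_mem {A B C : Set ℝ} (hA : A.OrdConnected)
    (hB : B.OrdConnected) (hA₀ : A.Nonempty) (hB₀ : B.Nonempty)
    (hC : ∀ a ∈ A, ∀ b ∈ B, (a + b) / 2 ∈ C) :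
    volume A + volume B ≤ 2 * volume C := by
  refine (add_le_add (Real.volume_le_diam A) (Real.volume_le_diam B)).trans <|
    ENNReal.biSup_add_biSup_le hA₀ hB₀ fun x hx u hu =>
      ENNReal.biSup_add_biSup_le hA₀ hB₀ fun y hy v hv => ?_
  have hsub := Icc_add_div_two_subset hC (hA.out (min_rec' (· ∈ A) hx hy) (max_rec' _ hx hy))
    (hB.out (min_rec' (· ∈ B) hu hv) (max_rec' _ hu hv)) min_le_max min_le_max
  calc edist x y + edist u v
      = 2 * ENNReal.ofReal ((max x y + max u v) / 2 - (min x y + min u v) / 2) := by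
        rw [edist_dist, edist_dist, Real.dist_eq, Real.dist_eq, ← max_sub_min_eq_abs',
          ← max_sub_min_eq_abs', ← ENNReal.ofReal_add (by simp) (by simp),
          ← ENNReal.ofReal_ofNat 2, ← ENNReal.ofReal_mul zero_le_two]
        ring_nf
    _ ≤ 2 * volume C := by rw [← Real.volume_Icc]; gcongr

structure LogConcave (F : ℝ → ℝ) : Prop where
  nonneg : ∀ x, 0 ≤ F x
  rpow_mul_rpow_le : ∀ ⦃x y a b : ℝ⦄, 0 < a → 0 < b → a + b = 1 →
    F x ^ a * F y ^ b ≤ F (a * x + b * y)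

namespace LogConcave

variable {F G : ℝ → ℝ}

lemma ordConnected_setOf_lt (hF : LogConcave F) {s : ℝ} (hs : 0 ≤ s) :
    OrdConnected {x | s < F x} := by
  refine Convex.ordConnected <| convex_iff_forall_pos.2 fun x hx y hy a b ha hb hab => ?_
  calc s = s ^ a * s ^ b := by rw [← Real.rpow_add' hs (by simp [hab]), hab, Real.rpow_one]
    _ < F x ^ a * F y ^ b := mul_lt_mul'' (Real.rpow_lt_rpow hs hx ha)
        (Real.rpow_lt_rpow hs hy hb) (by positivity) (by positivity)
    _ ≤ F (a • x + b • y) := hF.rpow_mul_rpow_le ha hb hab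

lemma measurable (hF : LogConcave F) : Measurable F := by
  refine measurable_of_Ioi fun s => ?_
  rcases lt_or_ge s 0 with hs | hs
  · rw [show F ⁻¹' Ioi s = univ from eq_univ_of_forall fun x => hs.trans_le (hF.nonneg x)]
    exact MeasurableSet.univ
  · exact (hF.ordConnected_setOf_lt hs).measurableSet

lemma mul (hF : LogConcave F) (hG : LogConcave G) : LogConcave fun x => F x * G x where
  nonneg x := mul_nonneg (hF.nonneg x) (hG.nonneg x)
  rpow_mul_rpow_le x y a b ha hb hab := by
    rw [Real.mul_rpow (hF.nonneg x) (hG.nonneg x), Real.mul_rpow (hF.nonneg y) (hG.nonneg y),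
      mul_mul_mul_comm]
    exact mul_le_mul (hF.rpow_mul_rpow_le ha hb hab) (hG.rpow_mul_rpow_le ha hb hab)
      (mul_nonneg (Real.rpow_nonneg (hG.nonneg x) a) (Real.rpow_nonneg (hG.nonneg y) b))
      (hF.nonneg _)

lemma const_mul (hF : LogConcave F) {c : ℝ} (hc : 0 ≤ c) : LogConcave fun x => c * F x :=
  LogConcave.mul ⟨fun _ => hc, fun x y a b _ _ hab => by
    rw [← Real.rpow_add' hc (by simp [hab]), hab, Real.rpow_one]⟩ hF

lemma min_const (hF : LogConcave F) {c : ℝ} (hc : 0 ≤ c) : LogConcave fun x => min (F x) c where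
  nonneg x := le_min (hF.nonneg x) hc
  rpow_mul_rpow_le x y a b ha hb hab := by
    have hx := le_min (hF.nonneg x) hc
    have hy := le_min (hF.nonneg y) hc
    refine le_min ((mul_le_mul ?_ ?_ (Real.rpow_nonneg hy b)
      (Real.rpow_nonneg (hF.nonneg x) a)).trans (hF.rpow_mul_rpow_le ha hb hab)) ?_
    · exact Real.rpow_le_rpow hx (min_le_left _ _) ha.le
    · exact Real.rpow_le_rpow hy (min_le_left _ _) hb.le
    · calc min (F x) c ^ a * min (F y) c ^ b ≤ c ^ a * c ^ b :=
          mul_le_mul (Real.rpow_le_rpow hx (min_le_right _ _) ha.le)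
            (Real.rpow_le_rpow hy (min_le_right _ _) hb.le) (Real.rpow_nonneg hy b)
            (Real.rpow_nonneg hc a)
        _ = c := by rw [← Real.rpow_add' hc (by simp [hab]), hab, Real.rpow_one]

lemma mul_le_sq_midpoint (hF : LogConcave F) (x y : ℝ) :
    F x * F y ≤ F ((x + y) / 2) ^ 2 := by
  have h := hF.rpow_mul_rpow_le (x := x) (y := y) one_half_pos one_half_pos (add_halves 1)
  rw [← Real.sqrt_eq_rpow, ← Real.sqrt_eq_rpow, ← Real.sqrt_mul (hF.nonneg x),
    show 1 / 2 * x + 1 / 2 * y = (x + y) / 2 by ring] at h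
  calc F x * F y = √(F x * F y) ^ 2 := (Real.sq_sqrt (mul_nonneg (hF.nonneg x) (hF.nonneg y))).symm
    _ ≤ F ((x + y) / 2) ^ 2 := pow_le_pow_left₀ (Real.sqrt_nonneg _) h 2

end LogConcave

lemma ConcaveOn.logConcave_exp {L : ℝ → ℝ} (hL : ConcaveOn ℝ univ L) :
    LogConcave fun x => exp (L x) where
  nonneg x := (exp_pos _).le
  rpow_mul_rpow_le x y a b ha hb hab := by
    rw [← exp_mul, ← exp_mul, ← exp_add, exp_le_exp, mul_comm, mul_comm (L y)]
    exact hL.2 (mem_univ x) (mem_univ y) ha.le hb.le hab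

theorem ENNReal.mul_le_sq_of_add_le_two_mul {x y z : ENNReal} (h : x + y ≤ 2 * z) :
    x * y ≤ z ^ 2 := by
  rcases eq_or_ne z ⊤ with rfl | hz
  · simp
  have hxy : x + y ≠ ⊤ := ne_top_of_le_ne_top (by finiteness) h
  lift x to NNReal using (ENNReal.add_ne_top.1 hxy).1
  lift y to NNReal using (ENNReal.add_ne_top.1 hxy).2
  lift z to NNReal using hz
  norm_cast at h ⊢
  rw [← NNReal.coe_le_coe] at h ⊢
  push_cast at h ⊢
  nlinarith [sq_nonneg ((x : ℝ) - y), x.coe_nonneg, y.coe_nonneg]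

namespace LogConcave

variable {F G H : ℝ → ℝ}

/-- `hsup` says that `F` and `G` have the same supremum. -/
theorem lintegral_add_lintegral_le (hF : LogConcave F) (hG : LogConcave G) (hH : ∀ x, 0 ≤ H x)
    (hHm : AEMeasurable H) (hsup : ∀ t, 0 < t → ((∃ x, t < F x) ↔ ∃ y, t < G y))
    (hFGH : ∀ x y, F x * G y ≤ H ((x + y) / 2) ^ 2) :
    (∫⁻ x, ENNReal.ofReal (F x)) + ∫⁻ x, ENNReal.ofReal (G x) ≤
      2 * ∫⁻ x, ENNReal.ofReal (H x) := by
  have measurable_level (K : ℝ → ℝ) : Measurable fun t : ℝ => volume {x | t < K x} :=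
    Antitone.measurable fun t t' htt' => measure_mono fun x hx => htt'.trans_lt hx
  rw [lintegral_eq_lintegral_meas_lt volume (.of_forall hF.nonneg) hF.measurable.aemeasurable,
    lintegral_eq_lintegral_meas_lt volume (.of_forall hG.nonneg) hG.measurable.aemeasurable,
    lintegral_eq_lintegral_meas_lt volume (.of_forall hH) hHm,
    ← lintegral_add_left (measurable_level F), ← lintegral_const_mul 2 (measurable_level H)]
  refine setLIntegral_mono ((measurable_level H).const_mul 2) fun t (ht : 0 < t) => ?_
  by_cases hne : ∃ x, t < F x
  · refine volume_add_volume_le_two_mul_of_add_div_two_mem (hF.ordConnected_setOf_lt ht.le)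
      (hG.ordConnected_setOf_lt ht.le) hne ((hsup t ht).1 hne) fun x hx y hy => ?_
    refine lt_of_pow_lt_pow_left₀ 2 (hH _) ?_
    calc t ^ 2 = t * t := sq t
      _ < F x * G y := mul_lt_mul'' hx hy ht.le ht.le
      _ ≤ H ((x + y) / 2) ^ 2 := hFGH x y
  · have hG' : ¬ ∃ y, t < G y := fun h => hne ((hsup t ht).2 h)
    rw [not_nonempty_iff_eq_empty (s := {x | t < F x}).1 hne,
      not_nonempty_iff_eq_empty (s := {y | t < G y}).1 hG']
    simp

theorem lintegral_mul_lintegral_le_of_bddAbove (hF : LogConcave F) (hG : LogConcave G)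
    (hFb : BddAbove (range F)) (hGb : BddAbove (range G)) (hH : ∀ x, 0 ≤ H x)
    (hHm : AEMeasurable H) (hFGH : ∀ x y, F x * G y ≤ H ((x + y) / 2) ^ 2) :
    (∫⁻ x, ENNReal.ofReal (F x)) * ∫⁻ x, ENNReal.ofReal (G x) ≤
      (∫⁻ x, ENNReal.ofReal (H x)) ^ 2 := by
  rcases (Real.iSup_nonneg hF.nonneg).eq_or_lt with hMF | hMF
  · have : ∀ x, F x = 0 := fun x => le_antisymm (hMF ▸ le_ciSup hFb x) (hF.nonneg x)
    simp [this]
  rcases (Real.iSup_nonneg hG.nonneg).eq_or_lt with hMG | hMG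
  · have : ∀ x, G x = 0 := fun x => le_antisymm (hMG ▸ le_ciSup hGb x) (hG.nonneg x)
    simp [this]
  -- `c • F` and `c⁻¹ • G` have equal suprema and the same product of integrals as `F` and `G`.
  set c := √(⨆ x, G x) / √(⨆ x, F x)
  have hc : 0 < c := by positivity
  have hc' : 0 < c⁻¹ := inv_pos.2 hc
  have hcM : c * ⨆ x, F x = c⁻¹ * ⨆ x, G x := by
    simp only [c, inv_div]
    field_simp
    rw [Real.sq_sqrt hMF.le, Real.sq_sqrt hMG.le, mul_comm]
  have hsup : ∀ t, 0 < t → ((∃ x, t < c * F x) ↔ ∃ y, t < c⁻¹ * G y) := fun t _ => by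
    simp_rw [← div_lt_iff₀' hc, ← div_lt_iff₀' hc', ← lt_ciSup_iff hFb, ← lt_ciSup_iff hGb,
      div_lt_iff₀' hc, div_lt_iff₀' hc', hcM]
  have hsum := lintegral_add_lintegral_le (hF.const_mul hc.le) (hG.const_mul hc'.le) hH hHm hsup
    fun x y => by rw [mul_mul_mul_comm, mul_inv_cancel₀ hc.ne', one_mul]; exact hFGH x y
  simp_rw [ENNReal.ofReal_mul hc.le, ENNReal.ofReal_mul hc'.le,
    lintegral_const_mul' _ _ ENNReal.ofReal_ne_top] at hsum
  calc (∫⁻ x, ENNReal.ofReal (F x)) * ∫⁻ x, ENNReal.ofReal (G x)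
      = (ENNReal.ofReal c * ∫⁻ x, ENNReal.ofReal (F x)) *
          (ENNReal.ofReal c⁻¹ * ∫⁻ x, ENNReal.ofReal (G x)) := by
        rw [mul_mul_mul_comm, ← ENNReal.ofReal_mul hc.le, mul_inv_cancel₀ hc.ne',
          ENNReal.ofReal_one, one_mul]
    _ ≤ _ := ENNReal.mul_le_sq_of_add_le_two_mul hsum

lemma lintegral_eq_iSup_lintegral_min (hF : LogConcave F) :
    ∫⁻ x, ENNReal.ofReal (F x) = ⨆ n : ℕ, ∫⁻ x, ENNReal.ofReal (min (F x) n) := by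
  rw [← lintegral_iSup (fun n => (hF.min_const n.cast_nonneg).measurable.ennreal_ofReal)
    fun n m hnm x => ENNReal.ofReal_le_ofReal (min_le_min_left _ (Nat.mono_cast hnm))]
  refine lintegral_congr fun x =>
    le_antisymm ?_ (iSup_le fun n => ENNReal.ofReal_le_ofReal (min_le_left _ _))
  obtain ⟨N, hN⟩ := exists_nat_ge (F x)
  exact le_iSup_of_le N (by rw [min_eq_left hN])

/-- The Prékopa–Leindler inequality on the line, in its midpoint form. -/
theorem lintegral_mul_lintegral_le (hF : LogConcave F) (hG : LogConcave G) (hH : ∀ x, 0 ≤ H x)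
    (hHm : AEMeasurable H) (hFGH : ∀ x y, F x * G y ≤ H ((x + y) / 2) ^ 2) :
    (∫⁻ x, ENNReal.ofReal (F x)) * ∫⁻ x, ENNReal.ofReal (G x) ≤
      (∫⁻ x, ENNReal.ofReal (H x)) ^ 2 := by
  rw [hF.lintegral_eq_iSup_lintegral_min, hG.lintegral_eq_iSup_lintegral_min, ENNReal.iSup_mul]
  refine iSup_le fun n => ?_
  rw [ENNReal.mul_iSup]
  refine iSup_le fun m => ?_
  have hbdd (K : ℝ → ℝ) : BddAbove (range fun x => min (K x) (max n m : ℕ)) :=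
    ⟨_, forall_mem_range.2 fun x => min_le_right _ _⟩
  calc (∫⁻ x, ENNReal.ofReal (min (F x) n)) * ∫⁻ x, ENNReal.ofReal (min (G x) m)
      ≤ (∫⁻ x, ENNReal.ofReal (min (F x) (max n m : ℕ))) *
          ∫⁻ x, ENNReal.ofReal (min (G x) (max n m : ℕ)) := by
        gcongr <;> simp
    _ ≤ _ := lintegral_mul_lintegral_le_of_bddAbove (hF.min_const (Nat.cast_nonneg _))
        (hG.min_const (Nat.cast_nonneg _)) (hbdd F) (hbdd G) hH hHm fun x y =>
          (mul_le_mul (min_le_left _ _) (min_le_left _ _) (le_min (hG.nonneg y) (by simp))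
            (hF.nonneg x)).trans (hFGH x y)

end LogConcave

namespace RelLogConcave

variable {f : ℝ → ℝ}

lemma logConcave_mul_exp (hf0 : ∀ x, 0 ≤ f x) (hlc : RelLogConcave f) :
    LogConcave fun x => f x * exp (x ^ 2 / 2) :=
  ⟨fun x => mul_nonneg (hf0 x) (exp_pos _).le, fun x y a b ha hb hab => hlc x y a b ha.le hb.le hab⟩

lemma logConcave_exp_mul (hf0 : ∀ x, 0 ≤ f x) (hlc : RelLogConcave f) (l : ℝ) :
    LogConcave fun x => exp (l * x) * f x := by
  have hL : ConcaveOn ℝ univ fun x : ℝ => l * x - x ^ 2 / 2 :=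
    ⟨convex_univ, fun x _ y _ a b ha hb hab => by
      simp only [smul_eq_mul]
      nlinarith [mul_nonneg (mul_nonneg ha hb) (sq_nonneg (x - y))]⟩
  convert hL.logConcave_exp.mul (hlc.logConcave_mul_exp hf0) using 2 with x
  rw [mul_left_comm, ← exp_add]
  ring_nf

lemma mul_le_exp_mul_sq_midpoint (hf0 : ∀ x, 0 ≤ f x) (hlc : RelLogConcave f) (x y : ℝ) :
    f x * f y ≤ exp (-((x - y) ^ 2 / 4)) * f ((x + y) / 2) ^ 2 := by
  have h := (hlc.logConcave_mul_exp hf0).mul_le_sq_midpoint x y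
  rw [mul_mul_mul_comm, mul_pow, ← exp_add, ← exp_nat_mul, ← le_div_iff₀ (exp_pos _),
    mul_div_assoc, ← exp_sub] at h
  refine h.trans_eq ?_
  rw [mul_comm]
  congr 2
  push_cast
  ring

lemma exp_mul_mul_exp_mul_le (hf0 : ∀ x, 0 ≤ f x) (hlc : RelLogConcave f) (l x y : ℝ) :
    exp (l * x) * f x * (exp (-l * y) * f y) ≤ (exp (l ^ 2 / 2) * f ((x + y) / 2)) ^ 2 := by
  calc exp (l * x) * f x * (exp (-l * y) * f y) = exp (l * x + -l * y) * (f x * f y) := by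
        rw [exp_add]; ring
    _ ≤ exp (l * x + -l * y) * (exp (-((x - y) ^ 2 / 4)) * f ((x + y) / 2) ^ 2) :=
        mul_le_mul_of_nonneg_left (hlc.mul_le_exp_mul_sq_midpoint hf0 x y) (exp_pos _).le
    _ ≤ exp (l ^ 2) * f ((x + y) / 2) ^ 2 := by
        rw [← mul_assoc, ← exp_add]
        gcongr
        nlinarith [sq_nonneg (l - (x - y) / 2)]
    _ = (exp (l ^ 2 / 2) * f ((x + y) / 2)) ^ 2 := by
        rw [mul_pow, ← exp_nat_mul]; ring_nf

lemma lintegral_exp_mul_mul_le (hf0 : ∀ x, 0 ≤ f x) (hlc : RelLogConcave f)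
    (hint : ∫ x, f x = 1) (l : ℝ) :
    (∫⁻ x, ENNReal.ofReal (exp (l * x) * f x)) * ∫⁻ x, ENNReal.ofReal (exp (-l * x) * f x) ≤
      ENNReal.ofReal (exp (l ^ 2)) := by
  have hH := (integrable_of_integral_eq_one hint).const_mul (exp (l ^ 2 / 2))
  have hH0 (x : ℝ) : 0 ≤ exp (l ^ 2 / 2) * f x := mul_nonneg (exp_pos _).le (hf0 x)
  calc _ ≤ (∫⁻ x, ENNReal.ofReal (exp (l ^ 2 / 2) * f x)) ^ 2 :=
        (hlc.logConcave_exp_mul hf0 l).lintegral_mul_lintegral_le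
          (hlc.logConcave_exp_mul hf0 (-l)) hH0 hH.aemeasurable (hlc.exp_mul_mul_exp_mul_le hf0 l)
    _ = ENNReal.ofReal (exp (l ^ 2)) := by
        rw [← ofReal_integral_eq_lintegral_ofReal hH (.of_forall hH0), integral_const_mul, hint,
          mul_one, ← ENNReal.ofReal_pow (exp_pos _).le, ← exp_nat_mul]
        ring_nf

lemma lintegral_exp_mul_ne_zero (hf0 : ∀ x, 0 ≤ f x) (hlc : RelLogConcave f)
    (hint : ∫ x, f x = 1) (l : ℝ) : ∫⁻ x, ENNReal.ofReal (exp (l * x) * f x) ≠ 0 := by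
  intro h
  rw [lintegral_eq_zero_iff (hlc.logConcave_exp_mul hf0 l).measurable.ennreal_ofReal] at h
  have hf : f =ᵐ[volume] 0 := h.mono fun x hx => le_antisymm
    (nonpos_of_mul_nonpos_right (ENNReal.ofReal_eq_zero.1 hx) (exp_pos _)) (hf0 x)
  simp [integral_congr_ae hf] at hint

lemma integrable_exp_mul (hf0 : ∀ x, 0 ≤ f x) (hlc : RelLogConcave f) (hint : ∫ x, f x = 1)
    (l : ℝ) : Integrable fun x => exp (l * x) * f x := by
  have hF := hlc.logConcave_exp_mul hf0 l
  refine ⟨hF.measurable.aestronglyMeasurable,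
    (hasFiniteIntegral_iff_ofReal (.of_forall hF.nonneg)).2 (lt_top_iff_ne_top.2 fun htop => ?_)⟩
  have h := hlc.lintegral_exp_mul_mul_le hf0 hint l
  rw [htop, ENNReal.top_mul (hlc.lintegral_exp_mul_ne_zero hf0 hint (-l)), top_le_iff] at h
  exact ENNReal.ofReal_ne_top h

lemma integral_exp_mul_mul_le (hf0 : ∀ x, 0 ≤ f x) (hlc : RelLogConcave f)
    (hint : ∫ x, f x = 1) (l : ℝ) :
    (∫ x, exp (l * x) * f x) * ∫ x, exp (-l * x) * f x ≤ exp (l ^ 2) := by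
  have hF := hlc.logConcave_exp_mul hf0 l
  have hG := hlc.logConcave_exp_mul hf0 (-l)
  rw [← ENNReal.ofReal_le_ofReal_iff (exp_pos _).le, ENNReal.ofReal_mul (integral_nonneg hF.nonneg),
    ofReal_integral_eq_lintegral_ofReal (hlc.integrable_exp_mul hf0 hint l) (.of_forall hF.nonneg),
    ofReal_integral_eq_lintegral_ofReal (hlc.integrable_exp_mul hf0 hint (-l))
      (.of_forall hG.nonneg)]
  exact hlc.lintegral_exp_mul_mul_le hf0 hint l

end RelLogConcave

lemma two_add_sq_le_exp_add_exp_neg (u : ℝ) : 2 + u ^ 2 ≤ exp u + exp (-u) := by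
  have hsinh : (u / 2) ^ 2 ≤ sinh (u / 2) ^ 2 :=
    sq_le_sq.2 (by rw [abs_sinh]; exact self_le_sinh_iff.2 (abs_nonneg _))
  have hcosh : cosh u = cosh (2 * (u / 2)) := by ring_nf
  rw [cosh_two_mul, cosh_sq, cosh_eq] at hcosh
  linarith

lemma le_one_of_forall_one_add_mul_le_exp {s : ℝ} (h : ∀ t, 0 < t → 1 + t * s ≤ exp t) :
    s ≤ 1 := by
  have hslope := (hasDerivAt_exp 0).tendsto_slope_zero_right
  rw [exp_zero] at hslope
  refine ge_of_tendsto hslope (eventually_nhdsWithin_of_forall fun t (ht : 0 < t) => ?_)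
  rw [zero_add, smul_eq_mul, le_inv_mul_iff₀ ht]
  linarith [h t ht]

section ExponentialMoments

variable {f : ℝ → ℝ}

lemma integrable_mul_of_abs_le_exp_add_exp_neg (hf0 : ∀ x, 0 ≤ f x)
    (hexp : ∀ l, Integrable fun x => exp (l * x) * f x) {g : ℝ → ℝ} (hg : Continuous g) (c : ℝ)
    (hbound : ∀ x, |g x| ≤ exp (x - c) + exp (-(x - c))) : Integrable fun x => g x * f x := by
  have hf : Integrable f := by simpa using hexp 0
  refine Integrable.mono' (((hexp 1).const_mul (exp (-c))).add ((hexp (-1)).const_mul (exp c)))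
    (hg.aestronglyMeasurable.mul hf.aestronglyMeasurable) (.of_forall fun x => ?_)
  rw [norm_mul, Real.norm_eq_abs, Real.norm_of_nonneg (hf0 x)]
  calc |g x| * f x ≤ (exp (x - c) + exp (-(x - c))) * f x :=
        mul_le_mul_of_nonneg_right (hbound x) (hf0 x)
    _ = _ := by
        rw [Pi.add_apply, neg_sub, sub_eq_neg_add, sub_eq_neg_add, exp_add, exp_add]
        ring_nf

lemma one_le_integral_exp_mul (hf0 : ∀ x, 0 ≤ f x) (hint : ∫ x, f x = 1) {u : ℝ → ℝ}
    (hu : Integrable fun x => u x * f x) (hu0 : ∫ x, u x * f x = 0)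
    (he : Integrable fun x => exp (u x) * f x) : 1 ≤ ∫ x, exp (u x) * f x := by
  have hf := integrable_of_integral_eq_one hint
  calc 1 = ∫ x, f x + u x * f x := by rw [integral_add hf hu, hint, hu0, add_zero]
    _ ≤ _ := integral_mono (hf.add hu) he fun x => by
        nlinarith [mul_le_mul_of_nonneg_right (add_one_le_exp (u x)) (hf0 x)]

lemma two_add_integral_sq_mul_le (hf0 : ∀ x, 0 ≤ f x) (hint : ∫ x, f x = 1) {u : ℝ → ℝ}
    (hu : Integrable fun x => u x ^ 2 * f x) (hp : Integrable fun x => exp (u x) * f x)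
    (hq : Integrable fun x => exp (-u x) * f x) :
    2 + ∫ x, u x ^ 2 * f x ≤ (∫ x, exp (u x) * f x) + ∫ x, exp (-u x) * f x := by
  have hf := integrable_of_integral_eq_one hint
  rw [← integral_add hp hq]
  calc 2 + ∫ x, u x ^ 2 * f x = ∫ x, 2 * f x + u x ^ 2 * f x := by
        rw [integral_add (hf.const_mul 2) hu, integral_const_mul, hint, mul_one]
    _ ≤ _ := integral_mono ((hf.const_mul 2).add hu) (hp.add hq) fun x => by
        rw [Pi.add_apply]
        nlinarith [mul_le_mul_of_nonneg_right (two_add_sq_le_exp_add_exp_neg (u x)) (hf0 x)]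

theorem integral_sq_sub_mean_mul_le_one (hf0 : ∀ x, 0 ≤ f x) (hint : ∫ x, f x = 1)
    (hexp : ∀ l, Integrable fun x => exp (l * x) * f x)
    (hprod : ∀ l, (∫ x, exp (l * x) * f x) * ∫ x, exp (-l * x) * f x ≤ exp (l ^ 2)) :
    ∫ x, (x - ∫ y, y * f y) ^ 2 * f x ≤ 1 := by
  set m := ∫ y, y * f y
  have hf := integrable_of_integral_eq_one hint
  have hxf : Integrable fun x => x * f x :=
    integrable_mul_of_abs_le_exp_add_exp_neg hf0 hexp continuous_id 0 fun x => by
      nlinarith [abs_nonneg x, sq_abs x, two_add_sq_le_exp_add_exp_neg (x - 0)]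
  have hsq : Integrable fun x => (x - m) ^ 2 * f x :=
    integrable_mul_of_abs_le_exp_add_exp_neg hf0 hexp (by fun_prop) m fun x => by
      rw [abs_of_nonneg (sq_nonneg _)]; linarith [two_add_sq_le_exp_add_exp_neg (x - m)]
  have hxm : Integrable fun x => (x - m) * f x := by
    simpa only [sub_mul, Pi.sub_def] using hxf.sub (hf.const_mul m)
  have hmean : ∫ x, (x - m) * f x = 0 := by
    simp only [sub_mul]
    rw [integral_sub hxf (hf.const_mul m), integral_const_mul, hint, mul_one, sub_self]
  have hshift (l : ℝ) : (fun x => exp (l * (x - m)) * f x) =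
      fun x => exp (-(l * m)) * (exp (l * x) * f x) := by
    ext x; rw [← mul_assoc, ← exp_add]; ring_nf
  have hP (l : ℝ) : Integrable fun x => exp (l * (x - m)) * f x :=
    hshift l ▸ (hexp l).const_mul _
  have hP1 (l : ℝ) : 1 ≤ ∫ x, exp (l * (x - m)) * f x :=
    one_le_integral_exp_mul hf0 hint (by simpa only [mul_assoc] using hxm.const_mul l)
      (by simp only [mul_assoc]; rw [integral_const_mul, hmean, mul_zero]) (hP l)
  refine le_one_of_forall_one_add_mul_le_exp fun t ht => ?_
  obtain ⟨l, rfl⟩ : ∃ l, l ^ 2 = t := ⟨√t, sq_sqrt ht.le⟩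
  have hPP : (∫ x, exp (l * (x - m)) * f x) * ∫ x, exp (-l * (x - m)) * f x =
      (∫ x, exp (l * x) * f x) * ∫ x, exp (-l * x) * f x := by
    rw [hshift, hshift, integral_const_mul, integral_const_mul, mul_mul_mul_comm, ← exp_add]
    ring_nf; rw [exp_zero, one_mul]
  have h2 := two_add_integral_sq_mul_le hf0 hint (u := fun x => l * (x - m))
    (by simpa only [mul_pow, mul_assoc] using hsq.const_mul (l ^ 2)) (hP l)
    (by simpa only [neg_mul] using hP (-l))
  simp only [mul_pow, mul_assoc, integral_const_mul, ← neg_mul] at h2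
  nlinarith [mul_nonneg (sub_nonneg.2 (hP1 l)) (sub_nonneg.2 (hP1 (-l))), hprod l]

end ExponentialMoments

theorem stmt15 (f : ℝ → ℝ) (hf0 : ∀ x, 0 ≤ f x) (hlc : RelLogConcave f)
    (hint : ∫ x, f x = 1) :
    ∫ x, (x - ∫ y, y * f y) ^ 2 * f x ≤ 1 :=
  integral_sq_sub_mean_mul_le_one hf0 hint (hlc.integrable_exp_mul hf0 hint)
    (hlc.integral_exp_mul_mul_le hf0 hint)
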